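/- Let F ⪯ A be a face and let M be a finitely generated ℤ^d-graded S_A-submodule of ℂ[ℤ^d]. Then for every γ ∈ ℤ^d, the degree-γ component of the top cohomology H^{d_{A/F}}(℧•_F(M)) has ℂ-dimension at most 1. -/

import Mathlib

/-!
Common setup: `A` is a `d × n` integer matrix, given by its columns `a : Fin n → Lat d`,
with `ℤA = ℤ^d` (`SpansZ`) and `ℕA` pointed (`Pointed`).  Faces, semigroups, graded
modules, quasidegree sets, the dualizing complex `ω•_{S_A}` and the Ishida complexes
`℧•_F` are formalized below; all cohomology statements are expressed via the
(ℤ^d-)graded components of these complexes.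
-/

namespace GKZ

open scoped Classical

noncomputable section

abbrev Lat (d : ℕ) := Fin d → ℤ
abbrev CS (d : ℕ) := Fin d → ℂ
abbrev Laur (d : ℕ) := AddMonoidAlgebra ℂ (Lat d)

/-- Inclusion ℤ^d ⊆ ℂ^d. -/
def toC {d : ℕ} (α : Lat d) : CS d := fun i => (α i : ℂ)
/-- Inclusion ℤ^d ⊆ ℝ^d. -/
def toR {d : ℕ} (α : Lat d) : Fin d → ℝ := fun i => (α i : ℝ)
/-- The monomial t^α in the Laurent polynomial ring ℂ[ℤ^d]. -/
def mono {d : ℕ} (α : Lat d) : Laur d := AddMonoidAlgebra.single α 1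

variable {d n : ℕ}

/-- The affine semigroup ℕA generated by the columns of `A`. -/
def NA (a : Fin n → Lat d) : AddSubmonoid (Lat d) := AddSubmonoid.closure (Set.range a)

/-- ℕA is pointed: ℕA ∩ (−ℕA) = {0}. -/
def Pointed (a : Fin n → Lat d) : Prop := ∀ x ∈ NA a, -x ∈ NA a → x = 0

/-- ℤA = ℤ^d. -/
def SpansZ (a : Fin n → Lat d) : Prop :=
  AddSubgroup.closure (Set.range a) = (⊤ : AddSubgroup (Lat d))

/-- The real cone ℝ₊F spanned by the columns indexed by `F`. -/
def cone (a : Fin n → Lat d) (F : Set (Fin n)) : Set (Fin d → ℝ) :=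
  { x | ∃ c : Fin n → ℝ, (∀ i, 0 ≤ c i) ∧ (∀ i, i ∉ F → c i = 0) ∧ x = ∑ i, c i • toR (a i) }

/-- `F` is a face of `A`: ℝ₊F is a face of the cone ℝ₊A, and `F` consists of all the
columns of `A` lying on that face. -/
def IsFace (a : Fin n → Lat d) (F : Set (Fin n)) : Prop :=
  (∀ x y, x ∈ cone a Set.univ → y ∈ cone a Set.univ →
      x + y ∈ cone a F → x ∈ cone a F ∧ y ∈ cone a F) ∧
  (∀ i, toR (a i) ∈ cone a F → i ∈ F)

/-- ℕF. -/
def NFace (a : Fin n → Lat d) (F : Set (Fin n)) : AddSubmonoid (Lat d) :=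
  AddSubmonoid.closure (a '' F)

/-- ℤF. -/
def ZFace (a : Fin n → Lat d) (F : Set (Fin n)) : AddSubgroup (Lat d) :=
  AddSubgroup.closure (a '' F)

/-- ℂF ⊆ ℂ^d. -/
def CFace (a : Fin n → Lat d) (F : Set (Fin n)) : Submodule ℂ (CS d) :=
  Submodule.span ℂ (toC '' (a '' F))

/-- d_F, the rank of ℤF. -/
def dimF (a : Fin n → Lat d) (F : Set (Fin n)) : ℕ :=
  Module.finrank ℤ (Submodule.span ℤ (a '' F))

/-- σ_F, the sum of the columns of F. -/
def sigmaF (a : Fin n → Lat d) (F : Set (Fin n)) : Lat d :=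
  ∑ i : Fin n, if i ∈ F then a i else 0

/-- ε_A = a_1 + ⋯ + a_n. -/
def epsA (a : Fin n → Lat d) : Lat d := ∑ i : Fin n, a i

/-- ℕA − ℕF ⊆ ℤ^d. -/
def NAmNF (a : Fin n → Lat d) (F : Set (Fin n)) : Set (Lat d) :=
  {γ | ∃ u ∈ NA a, ∃ v ∈ NFace a F, γ = u - v}

/-- ℕF − ℕA ⊆ ℤ^d. -/
def NFmNA (a : Fin n → Lat d) (F : Set (Fin n)) : Set (Lat d) :=
  {γ | ∃ u ∈ NFace a F, ∃ v ∈ NA a, γ = u - v}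

/-- ℕF − ℕH ⊆ ℤ^d. -/
def NFmNH (a : Fin n → Lat d) (F H : Set (Fin n)) : Set (Lat d) :=
  {γ | ∃ u ∈ NFace a F, ∃ v ∈ NFace a H, γ = u - v}

/-- ℕA is normal: ℕA = ℤ^d ∩ ℝ₊A. -/
def Normal (a : Fin n → Lat d) : Prop :=
  ∀ γ : Lat d, γ ∈ NA a ↔ toR γ ∈ cone a Set.univ

/-- The Zariski closure of a subset of ℂ^d. -/
def zClosure {d : ℕ} (T : Set (CS d)) : Set (CS d) :=
  {x | ∀ p : MvPolynomial (Fin d) ℂ, (∀ y ∈ T, MvPolynomial.eval y p = 0) →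
    MvPolynomial.eval x p = 0}

def IsZClosed {d : ℕ} (Z : Set (CS d)) : Prop := zClosure Z ⊆ Z

/-- Irreducibility of a subset of ℂ^d in the Zariski topology. -/
def ZIrred {d : ℕ} (Z : Set (CS d)) : Prop :=
  Z.Nonempty ∧ ∀ C₁ C₂ : Set (CS d), IsZClosed C₁ → IsZClosed C₂ →
    Z ⊆ C₁ ∪ C₂ → Z ⊆ C₁ ∨ Z ⊆ C₂

/-- Krull (topological) dimension of a subset of ℂ^d with the Zariski topology:
the Krull dimension of the poset of irreducible Zariski-closed subsets contained in it. -/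
def zdim {d : ℕ} (Z : Set (CS d)) : WithBot ℕ∞ :=
  Order.krullDim {C : Set (CS d) // C ⊆ Z ∧ IsZClosed C ∧ ZIrred C}

/-- `Z` is an irreducible component of `W`: a maximal irreducible Zariski-closed subset. -/
def IsIrredComp {d : ℕ} (Z W : Set (CS d)) : Prop :=
  Z ⊆ W ∧ IsZClosed Z ∧ ZIrred Z ∧
    ∀ Z' : Set (CS d), IsZClosed Z' → ZIrred Z' → Z ⊆ Z' → Z' ⊆ W → Z' = Z

/-- The type of faces of `A`. -/
def FaceT (a : Fin n → Lat d) := {G : Set (Fin n) // IsFace a G}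

instance (a : Fin n → Lat d) : Finite (FaceT a) := by
  unfold FaceT; infer_instance

noncomputable instance (a : Fin n → Lat d) : Fintype (FaceT a) := Fintype.ofFinite _

/-- Degree set of the localization M[∂^{−G}] of the monomial module with degree set `E`:
the set E − ℕG. -/
def locE (a : Fin n → Lat d) (E : Set (Lat d)) (G : Set (Fin n)) : Set (Lat d) :=
  {γ | ∃ f ∈ NFace a G, γ + f ∈ E}

/-- Functions supported on a subset, as a ℂ-submodule of the function space. -/
def funSupported {ι : Type*} (S : Set ι) : Submodule ℂ (ι → ℂ) where
  carrier := {c | ∀ i, i ∉ S → c i = 0}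
  add_mem' := by
    intro x y hx hy i hi
    simp only [Set.mem_setOf_eq] at hx hy
    simp [Pi.add_apply, hx i hi, hy i hi]
  zero_mem' := by intro i _; rfl
  smul_mem' := by
    intro r x hx i hi
    simp only [Set.mem_setOf_eq] at hx
    simp [Pi.smul_apply, hx i hi]

/-- The degree-γ part of the term of the Ishida complex ℧•_F(M) (base face `F`, monomial
module with degree set `E`) whose summands are indexed by the faces of absolute dimension
`j` (cohomological degree `j − d_F`): functions on the faces `G ⊇ F` with `d_G = j` and
`γ ∈ E − ℕG`. -/
def ishChain (a : Fin n → Lat d) (E : Set (Lat d)) (F : Set (Fin n)) (j : ℤ) (γ : Lat d) :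
    Submodule ℂ (FaceT a → ℂ) :=
  funSupported {G : FaceT a | F ⊆ G.1 ∧ (dimF a G.1 : ℤ) = j ∧ γ ∈ locE a E G.1}

/-- The differential of the Ishida complex (in each ℤ^d-degree): the component from a face
`G'` into a face `G''` covering it is `ε G' G''` times the natural localization map. -/
def ishDelta (a : Fin n → Lat d) (ε : Set (Fin n) → Set (Fin n) → ℂ) :
    (FaceT a → ℂ) →ₗ[ℂ] (FaceT a → ℂ) where
  toFun c := fun G'' => ∑ G' : FaceT a,
    if G'.1 ⊆ G''.1 ∧ dimF a G''.1 = dimF a G'.1 + 1 then ε G'.1 G''.1 * c G' else 0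
  map_add' x y := by
    funext G''
    simp only [Pi.add_apply, ← Finset.sum_add_distrib]
    refine Finset.sum_congr rfl fun G' _ => ?_
    by_cases h : G'.1 ⊆ G''.1 ∧ dimF a G''.1 = dimF a G'.1 + 1
    · simp [h, mul_add]
    · simp [h]
  map_smul' r x := by
    funext G''
    simp only [Pi.smul_apply, smul_eq_mul, RingHom.id_apply, Finset.mul_sum]
    refine Finset.sum_congr rfl fun G' _ => ?_
    by_cases h : G'.1 ⊆ G''.1 ∧ dimF a G''.1 = dimF a G'.1 + 1
    · simp only [h, and_self, if_true]; ring
    · simp [h]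

/-- Degree-γ cocycles of the Ishida complex at absolute dimension `j`. -/
def ishZ (a : Fin n → Lat d) (E : Set (Lat d)) (ε : Set (Fin n) → Set (Fin n) → ℂ)
    (F : Set (Fin n)) (j : ℤ) (γ : Lat d) : Submodule ℂ (FaceT a → ℂ) :=
  ishChain a E F j γ ⊓ LinearMap.ker (ishDelta a ε)

/-- Degree-γ coboundaries of the Ishida complex at absolute dimension `j`. -/
def ishB (a : Fin n → Lat d) (E : Set (Lat d)) (ε : Set (Fin n) → Set (Fin n) → ℂ)
    (F : Set (Fin n)) (j : ℤ) (γ : Lat d) : Submodule ℂ (FaceT a → ℂ) :=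
  Submodule.map (ishDelta a ε) (ishChain a E F (j - 1) γ)

/-- The degree-γ component of the cohomology of the Ishida complex ℧•_F(M) at absolute
dimension `j` (cohomological degree `j − d_F`). -/
abbrev ishH (a : Fin n → Lat d) (E : Set (Lat d)) (ε : Set (Fin n) → Set (Fin n) → ℂ)
    (F : Set (Fin n)) (j : ℤ) (γ : Lat d) :=
  ↥(ishZ a E ε F j γ) ⧸
    Submodule.comap (ishZ a E ε F j γ).subtype (ishB a E ε F j γ)

/-- Nonvanishing of the degree-γ component of the cohomology of the Ishida complex. -/
def ishHne (a : Fin n → Lat d) (E : Set (Lat d)) (ε : Set (Fin n) → Set (Fin n) → ℂ)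
    (F : Set (Fin n)) (j : ℤ) (γ : Lat d) : Prop :=
  ¬ (ishZ a E ε F j γ ≤ ishB a E ε F j γ)

/-- Degree-γ part of the term of ω•_{S_A} in cohomological degree `i`:
functions on the faces `G` with `d_{A/G} = i` and `γ ∈ ℕG − ℕA`. -/
def omChain (a : Fin n → Lat d) (i : ℤ) (γ : Lat d) : Submodule ℂ (FaceT a → ℂ) :=
  funSupported {G : FaceT a | (dimF a G.1 : ℤ) = (d : ℤ) - i ∧ γ ∈ NFmNA a G.1}

/-- Degree-γ part of the differential of ω•_{S_A}: the component from a face `G'` to a face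
`G''` covered by it is `ε G' G''` times the natural projection ℂ{ℕG'−ℕA} → ℂ{ℕG''−ℕA}. -/
def omDelta (a : Fin n → Lat d) (ε : Set (Fin n) → Set (Fin n) → ℂ) (γ : Lat d) :
    (FaceT a → ℂ) →ₗ[ℂ] (FaceT a → ℂ) where
  toFun c := fun G'' =>
    if γ ∈ NFmNA a G''.1 then
      ∑ G' : FaceT a,
        if G''.1 ⊆ G'.1 ∧ dimF a G'.1 = dimF a G''.1 + 1 then ε G'.1 G''.1 * c G' else 0
    else 0
  map_add' x y := by
    funext G''
    by_cases hγ : γ ∈ NFmNA a G''.1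
    · simp only [Pi.add_apply, hγ, if_true, ← Finset.sum_add_distrib]
      refine Finset.sum_congr rfl fun G' _ => ?_
      by_cases h : G''.1 ⊆ G'.1 ∧ dimF a G'.1 = dimF a G''.1 + 1
      · simp [h, mul_add]
      · simp [h]
    · simp [hγ]
  map_smul' r x := by
    funext G''
    by_cases hγ : γ ∈ NFmNA a G''.1
    · simp only [Pi.smul_apply, smul_eq_mul, RingHom.id_apply, hγ, if_true, Finset.mul_sum]
      refine Finset.sum_congr rfl fun G' _ => ?_
      by_cases h : G''.1 ⊆ G'.1 ∧ dimF a G'.1 = dimF a G''.1 + 1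
      · simp only [h, and_self, if_true]; ring
      · simp [h]
    · simp [hγ]

/-- Degree-γ cocycles of ω•_{S_A} in cohomological degree `i`. -/
def omZ (a : Fin n → Lat d) (ε : Set (Fin n) → Set (Fin n) → ℂ) (i : ℤ) (γ : Lat d) :
    Submodule ℂ (FaceT a → ℂ) :=
  omChain a i γ ⊓ LinearMap.ker (omDelta a ε γ)

/-- Degree-γ coboundaries of ω•_{S_A} in cohomological degree `i`. -/
def omB (a : Fin n → Lat d) (ε : Set (Fin n) → Set (Fin n) → ℂ) (i : ℤ) (γ : Lat d) :
    Submodule ℂ (FaceT a → ℂ) :=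
  Submodule.map (omDelta a ε γ) (omChain a (i - 1) γ)

/-- Nonvanishing of H^i(ω•_{S_A})_γ. -/
def omHne (a : Fin n → Lat d) (ε : Set (Fin n) → Set (Fin n) → ℂ) (i : ℤ) (γ : Lat d) : Prop :=
  ¬ (omZ a ε i γ ≤ omB a ε i γ)

/-- A ℤ^d-graded S_A-module, presented by its grading together with the (degree-shifting)
action of the monomials t^u, u ∈ ℕA. -/
structure GradedSAMod (a : Fin n → Lat d) (M : Type) [AddCommGroup M] [Module ℂ M] where
  decomp : Lat d → Submodule ℂ M
  internal : DirectSum.IsInternal decomp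
  act : (u : Lat d) → u ∈ NA a → (M →ₗ[ℂ] M)
  act_zero : ∀ h0 : (0 : Lat d) ∈ NA a, act 0 h0 = LinearMap.id
  act_add : ∀ (u : Lat d) (hu : u ∈ NA a) (v : Lat d) (hv : v ∈ NA a) (huv : u + v ∈ NA a),
    act (u + v) huv = (act u hu).comp (act v hv)
  act_grade : ∀ (u : Lat d) (hu : u ∈ NA a) (γ : Lat d), ∀ m ∈ decomp γ,
    act u hu m ∈ decomp (γ + u)

/-- Finite generation over S_A. -/
def GradedSAMod.FGmod {a : Fin n → Lat d} {M : Type} [AddCommGroup M] [Module ℂ M]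
    (g : GradedSAMod a M) : Prop :=
  ∃ S : Finset M, ∀ m : M,
    m ∈ Submodule.span ℂ {x | ∃ u, ∃ hu : u ∈ NA a, ∃ s ∈ S, x = g.act u hu s}

/-- Degrees of nonzero homogeneous elements of `M` that survive in the localization
`M[∂^{−H}]` (i.e. are killed by no power of t^{σ_H}). -/
def GradedSAMod.survTdeg {a : Fin n → Lat d} {M : Type} [AddCommGroup M] [Module ℂ M]
    (g : GradedSAMod a M) (H : Set (Fin n)) : Set (Lat d) :=
  {γ | ∃ m ∈ g.decomp γ, m ≠ 0 ∧ ∀ (k : ℕ) (hk : k • sigmaF a H ∈ NA a), g.act _ hk m ≠ 0}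

/-- The quasidegree set of the localization `M[∂^{−H}]` of a finitely generated graded
module `M`: the union over `k` of the Zariski closures of the true degree sets of the
finitely generated graded submodules t^{−kσ_H}·M of the localization. -/
def GradedSAMod.qdegLoc {a : Fin n → Lat d} {M : Type} [AddCommGroup M] [Module ℂ M]
    (g : GradedSAMod a M) (H : Set (Fin n)) : Set (CS d) :=
  ⋃ k : ℕ, zClosure (toC '' {γ : Lat d | γ + k • sigmaF a H ∈ g.survTdeg H})

/-- A ℂ-submodule is graded: it is spanned by its homogeneous elements. -/
def IsGradedSubC {d : ℕ} {M : Type} [AddCommGroup M] [Module ℂ M]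
    (decomp : Lat d → Submodule ℂ M) (N : Submodule ℂ M) : Prop :=
  N = Submodule.span ℂ ((N : Set M) ∩ ⋃ γ : Lat d, (decomp γ : Set M))

/-- A ℂ-submodule is an S_A-submodule: stable under the monomial action. -/
def IsStableSub {a : Fin n → Lat d} {M : Type} [AddCommGroup M] [Module ℂ M]
    (g : GradedSAMod a M) (N : Submodule ℂ M) : Prop :=
  ∀ (u : Lat d) (hu : u ∈ NA a), ∀ m ∈ N, g.act u hu m ∈ N

/-- The semigroup ring S_A = ℂ[ℕA] as a subalgebra of ℂ[ℤ^d]. -/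
def SAlg (a : Fin n → Lat d) : Subalgebra ℂ (Laur d) :=
  Algebra.adjoin ℂ {x | ∃ α ∈ NA a, x = mono α}

/-- The monomial t^u, u ∈ ℕA, as an element of S_A. -/
def smono (a : Fin n → Lat d) (u : Lat d) (hu : u ∈ NA a) : ↥(SAlg a) :=
  ⟨mono u, Algebra.subset_adjoin ⟨u, hu, rfl⟩⟩

/-- The underlying ℂ-vector space of the monomial module ℂ{E}: finitely supported
functions on `E`. -/
abbrev wMod (d : ℕ) (E : Set (Lat d)) := ↥(Finsupp.supported ℂ ℂ E)

/-- The action of the monomial t^w on ℂ{E}: shift the degree by `w`, truncate back to `E`. -/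
def wAct {d : ℕ} (E : Set (Lat d)) (w : Lat d) : wMod d E →ₗ[ℂ] wMod d E :=
  (Finsupp.restrictDom ℂ ℂ E).comp
    ((Finsupp.lmapDomain ℂ ℂ (fun γ => γ + w)).comp (Finsupp.supported ℂ ℂ E).subtype)

/-- The elements annihilated by some power of the ideal generated by the t^{a_i}, i ∉ F. -/
def torsionAt (a : Fin n → Lat d) (F : Set (Fin n)) {ML : Type} [AddCommGroup ML]
    [Module ℂ ML] (TL : (u : Lat d) → u ∈ NA a → (ML →ₗ[ℂ] ML)) : Set ML :=
  {y | ∃ k : ℕ, ∀ f : Fin k → Fin n, (∀ j, f j ∉ F) →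
    ∀ h : (∑ j, a (f j)) ∈ NA a, TL (∑ j, a (f j)) h y = 0}

/-- The toric ideal I_A ⊆ R_A = ℂ[∂_1,…,∂_n]. -/
def toricIdeal (a : Fin n → Lat d) : Ideal (MvPolynomial (Fin n) ℂ) :=
  RingHom.ker (MvPolynomial.aeval (fun i => mono (a i)) : MvPolynomial (Fin n) ℂ →ₐ[ℂ] Laur d)

/-- The ideal I_F^A = I_A + ⟨∂_i : a_i ∉ F⟩ of R_A. -/
def IFA (a : Fin n → Lat d) (F : Set (Fin n)) : Ideal (MvPolynomial (Fin n) ℂ) :=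
  toricIdeal a ⊔ Ideal.span {p | ∃ i, i ∉ F ∧ p = MvPolynomial.X i}

/-- An R_A-submodule is graded: it is spanned by its homogeneous elements. -/
def IsGradedSubR {d n : ℕ} {M : Type} [AddCommGroup M] [Module ℂ M]
    [Module (MvPolynomial (Fin n) ℂ) M]
    (decomp : Lat d → Submodule ℂ M) (N : Submodule (MvPolynomial (Fin n) ℂ) M) : Prop :=
  N = Submodule.span (MvPolynomial (Fin n) ℂ) ((N : Set M) ∩ ⋃ γ : Lat d, (decomp γ : Set M))

/-- `h` is the primitive integral support function of the facet `G`. -/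
def IsPISF (a : Fin n → Lat d) (G : Set (Fin n)) (h : Lat d →ₗ[ℤ] ℤ) : Prop :=
  (∃ x, h x = 1) ∧ (∀ i, 0 ≤ h (a i)) ∧ (∀ i, h (a i) = 0 ↔ i ∈ G)

/-- The ℂ-linear extension of an integral linear form to ℂ^d. -/
def hC {d : ℕ} (h : Lat d →ₗ[ℤ] ℤ) (β : CS d) : ℂ :=
  ∑ j : Fin d, β j * ((h (Pi.single j 1) : ℤ) : ℂ)


/-!
The top term of `℧•_F(M)` is `M[∂^{−A}]` alone. Indeed, if `d_G = d` then `ℤG` has finite index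
in `ℤ^d`, so for each column some `m a_i` with `m > 0` lies in `ℤG = ℕG − ℕG`; then
`m a_i + q ∈ ℕG` with `q ∈ ℕG`, and since `G` is a face, `a_i ∈ G`. So `G = A`, and each graded
piece of the top term, hence of its cohomology, is at most one-dimensional.
-/

lemma Submodule.exists_pos_smul_mem_of_finrank_eq {M : Type*} [AddCommGroup M]
    [Module.Finite ℤ M] (N : Submodule ℤ M) (h : Module.finrank ℤ N = Module.finrank ℤ M)
    (x : M) : ∃ m : ℤ, 0 < m ∧ m • x ∈ N := by
  have hquot : Module.finrank ℤ (M ⧸ N) = 0 := by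
    have := N.finrank_quotient_add_finrank
    omega
  obtain ⟨r, hr, hrx⟩ := Module.finrank_eq_zero_iff.mp hquot (Submodule.Quotient.mk x)
  rw [← Submodule.Quotient.mk_smul, Submodule.Quotient.mk_eq_zero] at hrx
  -- `r` may be negative; `r * r` is not
  exact ⟨r * r, mul_self_pos.mpr hr, by rw [mul_smul]; exact N.smul_mem r hrx⟩

lemma AddSubgroup.exists_sub_of_mem_closure {M : Type*} [AddCommGroup M] {s : Set M} {x : M}
    (hx : x ∈ AddSubgroup.closure s) :
    ∃ p ∈ AddSubmonoid.closure s, ∃ q ∈ AddSubmonoid.closure s, x = p - q := by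
  induction hx using AddSubgroup.closure_induction with
  | mem y hy => exact ⟨y, AddSubmonoid.subset_closure hy, 0, zero_mem _, (sub_zero y).symm⟩
  | zero => exact ⟨0, zero_mem _, 0, zero_mem _, (sub_zero 0).symm⟩
  | add y z _ _ hy hz =>
    obtain ⟨p, hp, q, hq, rfl⟩ := hy
    obtain ⟨p', hp', q', hq', rfl⟩ := hz
    exact ⟨p + p', add_mem hp hp', q + q', add_mem hq hq', by abel⟩
  | neg y _ hy =>
    obtain ⟨p, hp, q, hq, rfl⟩ := hy
    exact ⟨q, hq, p, hp, neg_sub p q⟩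

lemma toR_add (x y : Lat d) : toR (x + y) = toR x + toR y := by
  funext j; simp [toR]

lemma toR_zsmul (m : ℤ) (x : Lat d) : toR (m • x) = (m : ℝ) • toR x := by
  funext j; simp [toR]

section Cone

variable (a : Fin n → Lat d) (G : Set (Fin n))

lemma zero_mem_cone : (0 : Fin d → ℝ) ∈ cone a G :=
  ⟨0, fun _ => le_rfl, fun _ _ => rfl, by simp⟩

variable {a G}

lemma add_mem_cone {x y : Fin d → ℝ} (hx : x ∈ cone a G) (hy : y ∈ cone a G) :
    x + y ∈ cone a G := by
  obtain ⟨c, hc0, hcG, rfl⟩ := hx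
  obtain ⟨e, he0, heG, rfl⟩ := hy
  refine ⟨c + e, fun i => add_nonneg (hc0 i) (he0 i),
    fun i hi => by simp [hcG i hi, heG i hi], ?_⟩
  simp only [Pi.add_apply, add_smul, Finset.sum_add_distrib]

lemma smul_mem_cone {x : Fin d → ℝ} {t : ℝ} (ht : 0 ≤ t) (hx : x ∈ cone a G) :
    t • x ∈ cone a G := by
  obtain ⟨c, hc0, hcG, rfl⟩ := hx
  refine ⟨t • c, fun i => mul_nonneg ht (hc0 i), fun i hi => by simp [hcG i hi], ?_⟩
  simp only [Finset.smul_sum, Pi.smul_apply, smul_eq_mul, smul_smul]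

lemma toR_mem_cone {i : Fin n} (hi : i ∈ G) : toR (a i) ∈ cone a G := by
  refine ⟨Pi.single i 1, fun j => ?_,
    fun j hj => Pi.single_eq_of_ne (ne_of_mem_of_not_mem hi hj).symm _, ?_⟩
  · by_cases hj : j = i <;> simp [hj]
  · simp [Pi.single_apply]

lemma cone_subset_cone_univ : cone a G ⊆ cone a Set.univ := by
  rintro x ⟨c, hc0, -, hx⟩
  exact ⟨c, hc0, fun i hi => absurd (Set.mem_univ i) hi, hx⟩

lemma toR_mem_cone_of_mem_NFace {p : Lat d} (hp : p ∈ NFace a G) : toR p ∈ cone a G := by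
  induction hp using AddSubmonoid.closure_induction with
  | mem x hx =>
    obtain ⟨i, hi, rfl⟩ := hx
    exact toR_mem_cone hi
  | zero =>
    convert zero_mem_cone a G
    funext j; simp [toR]
  | add x y _ _ hx hy => rw [toR_add]; exact add_mem_cone hx hy

end Cone

section Face

variable {a : Fin n → Lat d} {G : Set (Fin n)}

lemma IsFace.mem_of_smul_mem_span (hG : IsFace a G) {i : Fin n} {m : ℤ} (hm : 0 < m)
    (hmem : m • a i ∈ Submodule.span ℤ (a '' G)) : i ∈ G := by
  rw [← Submodule.mem_toAddSubgroup, Submodule.span_int_eq_addSubgroupClosure] at hmem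
  obtain ⟨p, hp, q, hq, hpq⟩ := AddSubgroup.exists_sub_of_mem_closure hmem
  have hsum : toR (m • a i) + toR q ∈ cone a G := by
    rw [← toR_add, hpq, sub_add_cancel]
    exact toR_mem_cone_of_mem_NFace hp
  have hmul : toR (m • a i) ∈ cone a Set.univ := by
    rw [toR_zsmul]
    exact smul_mem_cone (by positivity) (toR_mem_cone (Set.mem_univ i))
  have hmulG := (hG.1 _ _ hmul (cone_subset_cone_univ (toR_mem_cone_of_mem_NFace hq)) hsum).1
  have hm' : (0 : ℝ) < m := by exact_mod_cast hm
  have hi := smul_mem_cone (inv_nonneg.mpr hm'.le) hmulG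
  rw [toR_zsmul, smul_smul, inv_mul_cancel₀ hm'.ne', one_smul] at hi
  exact hG.2 i hi

lemma IsFace.eq_univ_of_dimF_eq (hG : IsFace a G) (hdim : dimF a G = d) : G = Set.univ := by
  refine Set.eq_univ_of_forall fun i => ?_
  have hfull : Module.finrank ℤ (Submodule.span ℤ (a '' G)) = Module.finrank ℤ (Lat d) := by
    rw [Module.finrank_fin_fun]; exact hdim
  obtain ⟨m, hm, hmem⟩ := Submodule.exists_pos_smul_mem_of_finrank_eq _ hfull (a i)
  exact hG.mem_of_smul_mem_span hm hmem

end Face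

lemma finrank_funSupported_le_card {ι : Type*} [Fintype ι] (S : Set ι) :
    Module.finrank ℂ (funSupported S) ≤ Nat.card S := by
  let restrict := (LinearMap.funLeft ℂ ℂ ((↑) : S → ι)).comp (funSupported S).subtype
  have hinj : Function.Injective restrict := by
    intro c c' h
    ext i
    by_cases hi : i ∈ S
    · exact congrFun h ⟨i, hi⟩
    · rw [c.2 i hi, c'.2 i hi]
  calc Module.finrank ℂ (funSupported S) ≤ Module.finrank ℂ (S → ℂ) :=
        LinearMap.finrank_le_finrank_of_injective hinj
    _ = Nat.card S := by rw [Module.finrank_fintype_fun_eq_card, Nat.card_eq_fintype_card]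

lemma finrank_ishChain_top_le_one (a : Fin n → Lat d) (E : Set (Lat d)) (F : Set (Fin n))
    (γ : Lat d) : Module.finrank ℂ (ishChain a E F d γ) ≤ 1 := by
  refine (finrank_funSupported_le_card _).trans (Finite.card_le_one_iff_subsingleton.mpr ?_)
  rw [Set.subsingleton_coe]
  rintro G ⟨-, hG, -⟩ G' ⟨-, hG', -⟩
  exact Subtype.ext <| (G.2.eq_univ_of_dimF_eq (by exact_mod_cast hG)).trans
    (G'.2.eq_univ_of_dimF_eq (by exact_mod_cast hG')).symm

lemma finrank_ishH_le_finrank_ishChain (a : Fin n → Lat d) (E : Set (Lat d))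
    (ε : Set (Fin n) → Set (Fin n) → ℂ) (F : Set (Fin n)) (j : ℤ) (γ : Lat d) :
    Module.finrank ℂ (ishH a E ε F j γ) ≤ Module.finrank ℂ (ishChain a E F j γ) :=
  (Submodule.finrank_quotient_le _).trans (Submodule.finrank_mono inf_le_left)

theorem top_local_cohomology_dim_le_one_general
    {d n : ℕ} (a : Fin n → Lat d)
    (F : Set (Fin n))
    (E : Set (Lat d))
    (ε : Set (Fin n) → Set (Fin n) → ℂ) :
    ∀ γ : Lat d, Module.finrank ℂ (ishH a E ε F (d : ℤ) γ) ≤ 1 := fun γ =>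
  (finrank_ishH_le_finrank_ishChain a E ε F d γ).trans (finrank_ishChain_top_le_one a E F γ)

/-- For a face `F ⪯ A` and a finitely generated ℤ^d-graded
S_A-submodule `M` of ℂ[ℤ^d] (a monomial module, with degree set `E` a finite union of
translates s + ℕA), every graded component of the top cohomology H^{d_{A/F}}(℧•_F(M))
has ℂ-dimension at most 1. -/
theorem top_local_cohomology_dim_le_one
    {d n : ℕ} (hd : 0 < d) (hn : 0 < n) (a : Fin n → Lat d)
    (hZA : SpansZ a) (hPt : Pointed a)
    (F : Set (Fin n)) (hF : IsFace a F)
    (E : Set (Lat d))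
    (hE : ∃ S : Finset (Lat d), E = ⋃ s ∈ S, {γ : Lat d | ∃ u ∈ NA a, γ = s + u})
    (ε : Set (Fin n) → Set (Fin n) → ℂ)
    (hval : ∀ G' G'' : FaceT a, G'.1 ⊆ G''.1 → dimF a G''.1 = dimF a G'.1 + 1 →
      ε G'.1 G''.1 = 1 ∨ ε G'.1 G''.1 = -1)
    (hsq : ∀ (γ : Lat d) (j : ℤ) (c : FaceT a → ℂ),
      c ∈ ishChain a E F j γ → ishDelta a ε (ishDelta a ε c) = 0) :
    ∀ γ : Lat d, Module.finrank ℂ (ishH a E ε F (d : ℤ) γ) ≤ 1 :=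
  top_local_cohomology_dim_le_one_general a F E ε

end

end GKZ
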